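/- arXiv:1710.03390 — 5 statements merged into one kernel-verified Lean document; each statement's English description precedes it below -/
import Mathlib

section
/- For every causal model M, every basic formula φ, and every endogenous variable V: if V ∈ HP(M,φ) (i.e., V belongs to some complex cause of φ in M according to Halpern's 2015 definition), then V is a putative cause of φ in M with respect to the theory HP; that is, there exists a model M' ∈ ℳ(HP(M,φ)) such that S_M(V) = S_{M'}(V) and V ∈ ButFor(M',φ). -/
/-!
Take a complex cause `X⃗ ∋ X` with AC2 witness `g`, and let `M'` be `M` intervened by `g`
except that `X` is held at its actual value. Since `X⃗ ⊆ HP(M,φ)`, `M' ∈ ℳ(HP(M,φ))`.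
If `M' ⊨ ¬φ`, the same intervention would witness AC2 for `X⃗ \ {X}`, contradicting AC3;
so `M' ⊨ φ`, and resetting `X` to its value under `g` turns `M'` back into `M_[g] ⊨ ¬φ`.
-/

namespace HPFramework

open Classical

/-- A causal model in the Halpern–Pearl framework, over exogenous variables `U`,
endogenous variables `V` and value domain `D`.  It packages the causal structure
(the finite ranges of the variables), the DAG (the well-founded `parent` relation),
the structural equations `F` (each depending only on the exogenous variables and the
parents, and taking values in the range), and the context `ctx`. -/
structure CausalModel (U V D : Type) [Fintype U] [Fintype V] where
  rangeU : U → Finset D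
  range : V → Finset D
  rangeU_nonempty : ∀ W, (rangeU W).Nonempty
  range_nonempty : ∀ X, (range X).Nonempty
  parent : V → V → Prop
  acyclic : WellFounded parent
  F : V → (U → D) → (V → D) → D
  F_parents : ∀ X u (a b : V → D), (∀ Y, parent Y X → a Y = b Y) → F X u a = F X u b
  F_range : ∀ X u v, (∀ W, u W ∈ rangeU W) → (∀ Y, v Y ∈ range Y) → F X u v ∈ range X
  ctx : U → D
  ctx_range : ∀ W, ctx W ∈ rangeU W

variable {U V D : Type} [Fintype U] [Fintype V]

/-- The unique solution `S_M` of the system of structural equations of `M`. -/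
noncomputable def sol (M : CausalModel U V D) : V → D :=
  WellFounded.fix M.acyclic fun X ih =>
    M.F X M.ctx fun Y => if h : M.parent Y X then ih Y h else (M.range_nonempty Y).choose

/-- A partial, range-permitted assignment of values to the endogenous variables of `M`. -/
def PAssign (M : CausalModel U V D) : Type :=
  {g : V → Option D // ∀ X d, g X = some d → d ∈ M.range X}

/-- The intervened model `M_[X⃗ ← x⃗]`: the equation of each variable assigned a value
by `g` is replaced by the corresponding constant; other equations are unchanged. -/
noncomputable def intervene (M : CausalModel U V D) (g : PAssign M) : CausalModel U V D where
  rangeU := M.rangeU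
  range := M.range
  rangeU_nonempty := M.rangeU_nonempty
  range_nonempty := M.range_nonempty
  parent := M.parent
  acyclic := M.acyclic
  F := fun X u v => (g.1 X).getD (M.F X u v)
  F_parents := by
    intro X u a b hab
    cases h : g.1 X with
    | none => simp only [h, Option.getD_none]; exact M.F_parents X u a b hab
    | some d => simp [h]
  F_range := by
    intro X u v hu hv
    cases h : g.1 X with
    | none => simpa [h] using M.F_range X u v hu hv
    | some d => simpa [h] using g.2 X d h
  ctx := M.ctx
  ctx_range := M.ctx_range

/-- Basic formulas: Boolean combinations of atoms `(X = x)` with `X` endogenous. -/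
inductive BForm (V D : Type) : Type where
  | atom : V → D → BForm V D
  | not : BForm V D → BForm V D
  | and : BForm V D → BForm V D → BForm V D

/-- Evaluation of a basic formula at an assignment of values to the endogenous variables. -/
def BForm.eval (s : V → D) : BForm V D → Prop
  | .atom X x => s X = x
  | .not φ => ¬ φ.eval s
  | .and φ ψ => φ.eval s ∧ ψ.eval s

/-- `M ⊨ φ` for a basic formula `φ`, evaluated via the solution `S_M`. -/
def Sat (M : CausalModel U V D) (φ : BForm V D) : Prop := (BForm.eval (sol M)) φ

variable [DecidableEq V]

/-- The single intervention `[X ← x]` (with `x` in the range of `X`). -/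
noncomputable def single (M : CausalModel U V D) (X : V) (x : D)
    (hx : x ∈ M.range X) : PAssign M :=
  ⟨fun Y => if Y = X then some x else none, by
    intro Y d h
    simp only at h
    split at h
    next heq => cases h; exact heq ▸ hx
    next => cases h⟩

/-- The but-for theory: `X ∈ ButFor(M,φ)` iff `M ⊨ φ` and there is `x ∈ R(X)` with
`M ⊨ [X ← x] ¬φ`. -/
noncomputable def ButFor (M : CausalModel U V D) (φ : BForm V D) : Set V :=
  {X | Sat M φ ∧ ∃ x, ∃ hx : x ∈ M.range X, ¬ Sat (intervene M (single M X x hx)) φ}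

/-- `ℳ(A)` (relative to `M`): all models obtained from `M` by a (possibly partial)
range-permitted assignment to the variables in `A`, while any assigned variable outside
`A` is held fixed at its actual value in `M`. -/
def MSet (M : CausalModel U V D) (A : Set V) : Set (CausalModel U V D) :=
  {M' | ∃ g : PAssign M,
    (∀ X, X ∉ A → ∀ d, g.1 X = some d → d = sol M X) ∧ M' = intervene M g}

/-- A causal theory: a map assigning to every model and basic formula a set of
endogenous variables (the causes). -/
def CausalTheory (U V D : Type) [Fintype U] [Fintype V] : Type _ :=
  CausalModel U V D → BForm V D → Set V

/-- `X` is a putative cause of `φ` in `M` (w.r.t. the theory `C`). -/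
noncomputable def Putative (C : CausalTheory U V D) (M : CausalModel U V D)
    (φ : BForm V D) (X : V) : Prop :=
  ∃ M' ∈ MSet M (C M φ), sol M X = sol M' X ∧ X ∈ ButFor M' φ

/-- `X` is a preempted cause of `φ` in `M` (w.r.t. `C`): putative but not a cause. -/
noncomputable def Preempted (C : CausalTheory U V D) (M : CausalModel U V D)
    (φ : BForm V D) (X : V) : Prop :=
  Putative C M φ X ∧ X ∉ C M φ

/-- A theory is similarity-based if it recognises at least all but-for causes and at
most all putative causes. -/
noncomputable def SimilarityBased (C : CausalTheory U V D) : Prop :=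
  ∀ M φ, ButFor M φ ⊆ C M φ ∧ ∀ X ∈ C M φ, Putative C M φ X

/-- The principle of presumption. -/
noncomputable def Presumption (C : CausalTheory U V D) : Prop :=
  ∀ M φ X, Preempted C M φ X →
    ∀ M' ∈ MSet M (C M φ), sol M' X = sol M X → X ∈ ButFor M' φ →
      ∃ W, W ∉ C M φ ∧ sol M W ≠ sol M' W

/-- Empirical causal theories (fixed-point characterisation). -/
noncomputable def Empirical (C : CausalTheory U V D) : Prop :=
  ∀ M φ X, X ∈ C M φ ↔
    ∃ M' ∈ MSet M (C M φ), sol M X = sol M' X ∧ X ∈ ButFor M' φ ∧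
      ∀ W, W ∉ C M φ → sol M W = sol M' W

/-- The relation `M₁ ⊑_{C,φ} M₂`. -/
noncomputable def CRel (C : CausalTheory U V D) (φ : BForm V D)
    (M₁ M₂ : CausalModel U V D) : Prop :=
  M₂ ∈ MSet M₁ (C M₁ φ) ∧ Sat M₂ φ ∧ ∀ X, X ∉ C M₁ φ → sol M₁ X = sol M₂ X

/-- The closure property. -/
noncomputable def Closure (C : CausalTheory U V D) : Prop :=
  ∀ (M : CausalModel U V D) (φ : BForm V D) M', CRel C φ M M' → C M' φ ⊆ C M φ

/-- AC1 and AC2 of Halpern's (2015) definition, for the set `Xs`: `M ⊨ φ` and there is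
an intervention assigning (range-permitted) values to all of `Xs` and holding any other
assigned variable fixed at its actual value, after which `¬φ` holds. -/
noncomputable def AC12 (M : CausalModel U V D) (φ : BForm V D) (Xs : Set V) : Prop :=
  Sat M φ ∧ ∃ g : PAssign M,
    (∀ X ∈ Xs, (g.1 X).isSome) ∧
    (∀ X, X ∉ Xs → ∀ d, g.1 X = some d → d = sol M X) ∧
    ¬ Sat (intervene M g) φ

/-- `Xs` is a complex cause of `φ` in `M`: AC1, AC2 and the minimality condition AC3. -/
noncomputable def ComplexCause (M : CausalModel U V D) (φ : BForm V D) (Xs : Set V) : Prop :=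
  AC12 M φ Xs ∧ ∀ Ys : Set V, Ys ⊂ Xs → ¬ AC12 M φ Ys

/-- The HP theory: `X ∈ HP(M,φ)` iff `X` belongs to some complex cause of `φ` in `M`. -/
noncomputable def HP : CausalTheory U V D := fun M φ =>
  {X | ∃ Xs : Set V, X ∈ Xs ∧ ComplexCause M φ Xs}

/-- Helper: a relation admitting a strictly monotone rank function is well-founded. -/
theorem wf_of_rank {α : Type} (r : α → α → Prop) (rk : α → ℕ)
    (h : ∀ a b, r a b → rk a < rk b) : WellFounded r :=
  Subrelation.wf (fun {a b} hr => h a b hr) (InvImage.wf rk Nat.lt_wfRel.wf)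

end HPFramework

namespace HPFramework

variable {U V D : Type} [Fintype U] [Fintype V]

open Classical in
theorem sol_eq (M : CausalModel U V D) (X : V) :
    sol M X = M.F X M.ctx
      (fun Y => if M.parent Y X then sol M Y else (M.range_nonempty Y).choose) := by
  rw [sol, WellFounded.fix_eq]
  rfl

theorem sol_mem_range (M : CausalModel U V D) (X : V) : sol M X ∈ M.range X := by
  induction X using WellFounded.induction M.acyclic with
  | _ X ih =>
    rw [sol_eq]
    refine M.F_range _ _ _ M.ctx_range fun Y => ?_
    by_cases h : M.parent Y X
    · simpa [h] using ih Y h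
    · simpa [h] using (M.range_nonempty Y).choose_spec

theorem sol_intervene_of_some (M : CausalModel U V D) (g : PAssign M) {X : V} {d : D}
    (h : g.1 X = some d) : sol (intervene M g) X = d := by
  rw [sol_eq]
  show (g.1 X).getD _ = d
  rw [h, Option.getD_some]

def PAssign.FixesOutside {M : CausalModel U V D} (g : PAssign M) (A : Set V) : Prop :=
  ∀ X, X ∉ A → ∀ d, g.1 X = some d → d = sol M X

theorem PAssign.FixesOutside.mono {M : CausalModel U V D} {g : PAssign M} {A B : Set V}
    (hg : g.FixesOutside A) (hAB : A ⊆ B) : g.FixesOutside B :=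
  fun X hX => hg X fun hXA => hX (hAB hXA)

theorem ComplexCause.subset_HP {M : CausalModel U V D} {φ : BForm V D} {Xs : Set V}
    (hXs : ComplexCause M φ Xs) : Xs ⊆ HP M φ :=
  fun _ hX => ⟨Xs, hX, hXs⟩

variable [DecidableEq V]

namespace PAssign

variable {M : CausalModel U V D}

def update (g : PAssign M) (X : V) (d : D) (hd : d ∈ M.range X) : PAssign M :=
  ⟨Function.update g.1 X (some d), by
    intro Y e he
    rcases eq_or_ne Y X with rfl | hYX
    · rw [Function.update_self, Option.some_inj] at he
      exact he ▸ hd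
    · rw [Function.update_of_ne hYX] at he
      exact g.2 Y e he⟩

theorem update_apply_self (g : PAssign M) (X : V) (d : D) (hd : d ∈ M.range X) :
    (g.update X d hd).1 X = some d :=
  Function.update_self _ _ _

theorem update_apply_of_ne (g : PAssign M) {X Y : V} (hYX : Y ≠ X) (d : D)
    (hd : d ∈ M.range X) : (g.update X d hd).1 Y = g.1 Y :=
  Function.update_of_ne hYX _ _

theorem update_update (g : PAssign M) (X : V) (d e : D) (hd : d ∈ M.range X)
    (he : e ∈ M.range X) : (g.update X d hd).update X e he = g.update X e he :=
  Subtype.ext (Function.update_idem _ _ _)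

theorem update_eq_self (g : PAssign M) {X : V} {d : D} (h : g.1 X = some d)
    (hd : d ∈ M.range X) : g.update X d hd = g :=
  Subtype.ext (Function.update_eq_self_iff.mpr h.symm)

theorem FixesOutside.update {g : PAssign M} {A : Set V} (hg : g.FixesOutside A) {X : V}
    (hX : X ∈ A) (d : D) (hd : d ∈ M.range X) : (g.update X d hd).FixesOutside A := by
  intro Y hY e he
  rw [g.update_apply_of_ne (ne_of_mem_of_not_mem hX hY).symm] at he
  exact hg Y hY e he

theorem FixesOutside.update_sol {g : PAssign M} {A : Set V} (hg : g.FixesOutside A)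
    (X : V) : (g.update X (sol M X) (sol_mem_range M X)).FixesOutside (A \ {X}) := by
  intro Y hY e he
  rcases eq_or_ne Y X with rfl | hYX
  · rw [update_apply_self, Option.some_inj] at he
    exact he.symm
  · rw [g.update_apply_of_ne hYX] at he
    exact hg Y (fun hYA => hY ⟨hYA, hYX⟩) e he

end PAssign

theorem intervene_single_intervene (M : CausalModel U V D) (g : PAssign M) (X : V) (x : D)
    (hx : x ∈ M.range X) :
    intervene (intervene M g) (single (intervene M g) X x hx) = intervene M (g.update X x hx) := by
  unfold intervene
  congr 1
  funext Y u v
  rcases eq_or_ne Y X with rfl | hYX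
  · simp [single, PAssign.update_apply_self]
  · simp [single, hYX, PAssign.update_apply_of_ne]

namespace ComplexCause

variable {M : CausalModel U V D} {φ : BForm V D} {Xs : Set V}

theorem sat_intervene_update_sol (hXs : ComplexCause M φ Xs) {X : V} (hX : X ∈ Xs)
    {g : PAssign M} (hsome : ∀ Y ∈ Xs, (g.1 Y).isSome) (hfix : g.FixesOutside Xs) :
    Sat (intervene M (g.update X (sol M X) (sol_mem_range M X))) φ := by
  by_contra hns
  have hsome' : ∀ Y ∈ Xs \ {X}, ((g.update X (sol M X) (sol_mem_range M X)).1 Y).isSome := by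
    rintro Y ⟨hY, hYX⟩
    rw [g.update_apply_of_ne hYX]
    exact hsome Y hY
  exact hXs.2 (Xs \ {X}) (Set.sdiff_singleton_ssubset.mpr hX)
    ⟨hXs.1.1, _, hsome', hfix.update_sol X, hns⟩

end ComplexCause

/-- Proposition 1: every HP-cause is a putative cause w.r.t. HP. -/
theorem hp_cause_is_putative {U V D : Type} [Fintype U] [Fintype V] [DecidableEq V]
    (M : CausalModel U V D) (φ : BForm V D) (X : V)
    (h : X ∈ HP M φ) : Putative HP M φ X := by
  obtain ⟨Xs, hX, hXs⟩ := h
  obtain ⟨-, g, hsome, hfix, hns⟩ := hXs.1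
  replace hfix : g.FixesOutside Xs := hfix
  obtain ⟨x, hgx⟩ := Option.isSome_iff_exists.mp (hsome X hX)
  have hx : x ∈ M.range X := g.2 X x hgx
  set g' := g.update X (sol M X) (sol_mem_range M X)
  have hM' : intervene M g' ∈ MSet M (HP M φ) :=
    ⟨g', (hfix.mono hXs.subset_HP).update (hXs.subset_HP hX) _ _, rfl⟩
  have hsolX : sol M X = sol (intervene M g') X :=
    (sol_intervene_of_some M g' (g.update_apply_self X _ _)).symm
  have hreset : intervene (intervene M g') (single (intervene M g') X x hx) = intervene M g := by
    rw [intervene_single_intervene, PAssign.update_update, PAssign.update_eq_self g hgx]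
  refine ⟨intervene M g', hM', hsolX, hXs.sat_intervene_update_sol hX hsome hfix, x, hx, ?_⟩
  rwa [hreset]

end HPFramework
end

section
/- If a causal theory Cause is empirical, then Cause is similarity-based and Cause satisfies the principle of presumption. -/
namespace HPFramework

variable {U V D : Type} [Fintype U] [Fintype V]

def PAssign.empty (M : CausalModel U V D) : PAssign M :=
  ⟨fun _ => none, fun _ _ h => nomatch h⟩

theorem intervene_empty (M : CausalModel U V D) : intervene M (PAssign.empty M) = M := by
  cases M
  simp only [intervene, PAssign.empty, Option.getD_none]

theorem self_mem_MSet (M : CausalModel U V D) (A : Set V) : M ∈ MSet M A :=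
  ⟨PAssign.empty M, fun _ _ _ h => (Option.some_ne_none _ h.symm).elim, (intervene_empty M).symm⟩

namespace Empirical

variable [DecidableEq V] {C : CausalTheory U V D}

theorem butFor_subset (hC : Empirical C) (M : CausalModel U V D) (φ : BForm V D) :
    ButFor M φ ⊆ C M φ :=
  fun X hX => (hC M φ X).2 ⟨M, self_mem_MSet M _, rfl, hX, fun _ _ => rfl⟩

theorem putative_of_mem (hC : Empirical C) {M : CausalModel U V D} {φ : BForm V D} {X : V}
    (hX : X ∈ C M φ) : Putative C M φ X :=
  let ⟨M', hM', hsol, hbf, _⟩ := (hC M φ X).1 hX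
  ⟨M', hM', hsol, hbf⟩

theorem similarityBased (hC : Empirical C) : SimilarityBased C :=
  fun M φ => ⟨hC.butFor_subset M φ, fun _ => hC.putative_of_mem⟩

/-- A witness for a preempted cause that agreed with `M` off the causes would, by
empiricalness, make it a cause after all. -/
theorem presumption (hC : Empirical C) : Presumption C := by
  intro M φ X hpre M' hM' hsol hbf
  by_contra! hagree
  exact hpre.2 ((hC M φ X).2 ⟨M', hM', hsol.symm, hbf, hagree⟩)

end Empirical

/-- Proposition 2: empirical theories are similarity-based and satisfy
the principle of presumption. -/
theorem empirical_implies {U V D : Type} [Fintype U] [Fintype V] [DecidableEq V]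
    (C : CausalTheory U V D) (h : Empirical C) :
    SimilarityBased C ∧ Presumption C :=
  ⟨h.similarityBased, h.presumption⟩

end HPFramework
end

section
/- For every similarity-based causal theory Cause: if Cause satisfies closure, then Cause satisfies the principle of presumption. -/
namespace HPFramework

open Classical

variable {U V D : Type} [Fintype U] [Fintype V]

variable [DecidableEq V]

theorem butFor_subset_of_cRel {C : CausalTheory U V D}
    (hbf : ∀ M φ, ButFor M φ ⊆ C M φ) (hclo : Closure C) {φ : BForm V D}
    {M M' : CausalModel U V D} (h : CRel C φ M M') : ButFor M' φ ⊆ C M φ :=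
  (hbf M' φ).trans (hclo M φ M' h)

/-- similarity-based + closure implies presumption. -/
theorem closure_implies_presumption {U V D : Type} [Fintype U] [Fintype V] [DecidableEq V]
    (C : CausalTheory U V D) (hsim : SimilarityBased C) (hclo : Closure C) :
    Presumption C := by
  intro M φ X ⟨_, hX⟩ M' hM' _ hXbf
  by_contra! hagree
  exact hX (butFor_subset_of_cRel (fun M φ => (hsim M φ).1) hclo ⟨hM', hXbf.1, hagree⟩ hXbf)

end HPFramework
end

section
/- If a causal theory Cause satisfies closure, then for every basic formula φ the relation ⊑_{Cause,φ} on causal models is transitive: whenever M¹ ⊑_{Cause,φ} M² and M² ⊑_{Cause,φ} M³, also M¹ ⊑_{Cause,φ} M³. -/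
namespace HPFramework

variable {U V D : Type} [Fintype U] [Fintype V]

theorem CausalModel.ext_of_fields {M M' : CausalModel U V D} (h_rangeU : M.rangeU = M'.rangeU)
    (h_range : M.range = M'.range) (h_parent : M.parent = M'.parent) (h_F : M.F = M'.F)
    (h_ctx : M.ctx = M'.ctx) : M = M' := by
  cases M; cases M'
  cases h_rangeU; cases h_range; cases h_parent; cases h_F; cases h_ctx
  rfl

def PAssign.override {M : CausalModel U V D} (g' g : PAssign M) : PAssign M :=
  ⟨fun X => (g'.1 X).or (g.1 X), fun X d hd => by
    rcases Option.or_eq_some_iff.1 hd with h | ⟨-, h⟩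
    exacts [g'.2 X d h, g.2 X d h]⟩

theorem intervene_intervene (M : CausalModel U V D) (g : PAssign M)
    (g' : PAssign (intervene M g)) :
    intervene (intervene M g) g' = intervene M (PAssign.override (M := M) g' g) :=
  CausalModel.ext_of_fields rfl rfl rfl (by funext X u v; exact Option.getD_or.symm) rfl

theorem mem_MSet_trans {M₁ M₂ M₃ : CausalModel U V D} {A B : Set V}
    (h₂ : M₂ ∈ MSet M₁ A) (h₃ : M₃ ∈ MSet M₂ B) (hBA : B ⊆ A)
    (hsol : ∀ X ∉ A, sol M₁ X = sol M₂ X) : M₃ ∈ MSet M₁ A := by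
  obtain ⟨g, hg, rfl⟩ := h₂
  obtain ⟨g', hg', rfl⟩ := h₃
  refine ⟨PAssign.override (M := M₁) g' g, fun X hX d hd => ?_, intervene_intervene M₁ g g'⟩
  rcases Option.or_eq_some_iff.1 hd with h | ⟨-, h⟩
  · exact (hg' X (fun hB => hX (hBA hB)) d h).trans (hsol X hX).symm
  · exact hg X hX d h

theorem closure_implies_transitive_general {U V D : Type} [Fintype U] [Fintype V]
    (C : CausalTheory U V D) (hclo : Closure C) (φ : BForm V D)
    (M₁ M₂ M₃ : CausalModel U V D)
    (h12 : CRel C φ M₁ M₂) (h23 : CRel C φ M₂ M₃) :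
    CRel C φ M₁ M₃ := by
  have hsub : C M₂ φ ⊆ C M₁ φ := hclo M₁ φ M₂ h12
  obtain ⟨hmem12, -, hsol12⟩ := h12
  obtain ⟨hmem23, hsat3, hsol23⟩ := h23
  exact ⟨mem_MSet_trans hmem12 hmem23 hsub hsol12, hsat3,
    fun X hX => (hsol12 X hX).trans (hsol23 X fun h => hX (hsub h))⟩

/-- closure implies transitivity of `⊑_{C,φ}`. -/
theorem closure_implies_transitive {U V D : Type} [Fintype U] [Fintype V] [DecidableEq V]
    (C : CausalTheory U V D) (hclo : Closure C) (φ : BForm V D)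
    (M₁ M₂ M₃ : CausalModel U V D)
    (h12 : CRel C φ M₁ M₂) (h23 : CRel C φ M₂ M₃) :
    CRel C φ M₁ M₃ :=
  closure_implies_transitive_general C hclo φ M₁ M₂ M₃ h12 h23

end HPFramework
end

section
/- For every empirical causal theory Cause: if the relation ⊑_{Cause,φ} is transitive for every basic formula φ, then Cause satisfies closure. -/
namespace HPFramework

open Classical

variable {U V D : Type} [Fintype U] [Fintype V]

variable [DecidableEq V]

/-!
An empirical theory recognises `X ∈ Cause(M,φ)` exactly through a `⊑`-successor of `M` in
which `X` keeps its value and is a but-for cause of `φ`. For `M ⊑ M'` and `X ∈ Cause(M',φ)`,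
such a witness `M''` for `M'` is, by transitivity, also a `⊑`-successor of `M`; and if `X`
were not a cause in `M`, then `X` would keep its `M`-value in `M''`, making `M''` a witness
for `X ∈ Cause(M,φ)`.
-/

theorem Empirical.mem_iff_exists_crel {C : CausalTheory U V D} (hemp : Empirical C)
    (M : CausalModel U V D) (φ : BForm V D) (X : V) :
    X ∈ C M φ ↔ ∃ M', CRel C φ M M' ∧ sol M X = sol M' X ∧ X ∈ ButFor M' φ := by
  rw [hemp M φ X]
  constructor
  · rintro ⟨M', hM', hX, hbutFor, hfixed⟩
    exact ⟨M', ⟨hM', hbutFor.1, hfixed⟩, hX, hbutFor⟩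
  · rintro ⟨M', ⟨hM', -, hfixed⟩, hX, hbutFor⟩
    exact ⟨M', hM', hX, hbutFor, hfixed⟩

/-- for empirical theories, transitivity of `⊑_{C,φ}` implies closure. -/
theorem transitive_implies_closure {U V D : Type} [Fintype U] [Fintype V] [DecidableEq V]
    (C : CausalTheory U V D) (hemp : Empirical C)
    (htrans : ∀ φ : BForm V D, Transitive (CRel C φ)) :
    Closure C := by
  intro M φ M' hMM' X hX
  obtain ⟨M'', hM'M'', hXM'', hbutFor⟩ := (hemp.mem_iff_exists_crel M' φ X).mp hX
  have hMM'' : CRel C φ M M'' := htrans φ hMM' hM'M''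
  by_contra hXM
  exact hXM <| (hemp.mem_iff_exists_crel M φ X).mpr ⟨M'', hMM'', hMM''.2.2 X hXM, hbutFor⟩

end HPFramework
end
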